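/- Let G be a finite simple undirected graph, s and t distinct non-adjacent vertices of G, and u ∈ V(G)\{s,t} a vertex such that the closed neighborhood N_G[u] induces a clique in G. Then u does not belong to any minimal s,t-separator of G. -/

import Mathlib

variable {V : Type*}

/-- The graph obtained from `G` by deleting the vertices in `S` (deleted vertices
become isolated; components of vertices outside `S` are the components of `G − S`). -/
def gdel (G : SimpleGraph V) (S : Set V) : SimpleGraph V where
  Adj a b := G.Adj a b ∧ a ∉ S ∧ b ∉ S
  symm := by
    constructor
    intro a b h
    exact ⟨h.1.symm, h.2.2, h.2.1⟩
  loopless := by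
    constructor
    intro a h
    exact G.loopless.irrefl a h.1

/-- `compS G S v` is the vertex set of the connected component of `v` in `G − S`. -/
def compS (G : SimpleGraph V) (S : Set V) (v : V) : Set V :=
  {w | (gdel G S).Reachable v w}

/-- `S` is an `s,t`-separator of `G`: `S ⊆ V(G) \ {s,t}` and `s` and `t` lie in
different connected components of `G − S`. -/
def IsSep (G : SimpleGraph V) (s t : V) (S : Set V) : Prop :=
  s ∉ S ∧ t ∉ S ∧ ¬ (gdel G S).Reachable s t

/-- A minimal `s,t`-separator: no proper subset is an `s,t`-separator. -/
def IsMinSep (G : SimpleGraph V) (s t : V) (S : Set V) : Prop :=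
  IsSep G s t S ∧ ∀ S' : Set V, S' ⊂ S → ¬ IsSep G s t S'

/-- The (open) neighborhood of a vertex set `C` in `G`. -/
def nbdSet (G : SimpleGraph V) (C : Set V) : Set V :=
  {v | v ∉ C ∧ ∃ w ∈ C, G.Adj v w}

lemma key_lemma (G : SimpleGraph V) (u t : V) (S : Set V)
    (hclique : G.IsClique (insert u (G.neighborSet u)))
    (hut : u ≠ t) :
    ∀ n (a : V), a ∉ S → a ≠ u →
      ∀ w : (gdel G (S \ {u})).Walk a t, w.length = n → (gdel G S).Reachable a t := by
  intro n
  induction n using Nat.strong_induction_on with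
  | _ n IH =>
    intro a haS hau w hw
    cases w with
    | nil => exact SimpleGraph.Reachable.refl _
    | @cons _ c _ h p =>
      by_cases hcu : c = u
      · subst hcu
        cases p with
        | nil => exact absurd rfl hut
        | @cons _ d _ h' p' =>
          have hdu : d ≠ c := fun he => (gdel G (S \ {c})).loopless.irrefl c (he ▸ h')
          have hdS : d ∉ S := fun hd => h'.2.2 ⟨hd, hdu⟩
          have hlen : p'.length < n := by simp [← hw, SimpleGraph.Walk.length_cons]
          by_cases had : a = d
          · subst had
            exact IH p'.length hlen a haS hau p' rfl
          · have haN : a ∈ insert c (G.neighborSet c) :=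
              Set.mem_insert_of_mem _ (h.1.symm : G.Adj c a)
            have hdN : d ∈ insert c (G.neighborSet c) :=
              Set.mem_insert_of_mem _ h'.1
            have hadj : G.Adj a d := hclique haN hdN had
            have hedge : (gdel G S).Adj a d := ⟨hadj, haS, hdS⟩
            exact (SimpleGraph.Adj.reachable hedge).trans
              (IH p'.length hlen d hdS hdu p' rfl)
      · have hcS : c ∉ S := fun hc => h.2.2 ⟨hc, hcu⟩
        have hlen : p.length < n := by simp [← hw, SimpleGraph.Walk.length_cons]
        have hedge : (gdel G S).Adj a c := ⟨h.1, haS, hcS⟩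
        exact (SimpleGraph.Adj.reachable hedge).trans
          (IH p.length hlen c hcS hcu p rfl)

/-- If the closed neighborhood of `u` is a clique in `G`, then `u`
belongs to no minimal `s,t`-separator of `G`. -/
theorem stmt_9 [Fintype V] (G : SimpleGraph V) (s t u : V) (hst : s ≠ t)
    (hadj : ¬ G.Adj s t) (hus : u ≠ s) (hut : u ≠ t)
    (hclique : G.IsClique (insert u (G.neighborSet u))) :
    ∀ S : Set V, IsMinSep G s t S → u ∉ S := by
  intro S ⟨⟨hsS, htS, hne⟩, hmin⟩ huS
  have hsub : S \ {u} ⊂ S := Set.sdiff_singleton_ssubset.mpr huS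
  have hns := hmin (S \ {u}) hsub
  have hreach : (gdel G (S \ {u})).Reachable s t := by
    by_contra hnr
    exact hns ⟨fun h => hsS h.1, fun h => htS h.1, hnr⟩
  obtain ⟨w⟩ := hreach
  exact hne (key_lemma G u t S hclique hut w.length s hsS (Ne.symm hus) w rfl)
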